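/- Failure and recovery transitions preserve state validity: if ⟨cfg, fs⟩ is a valid state, then (1) for every nonempty Δ ⊆ HW \ fs, the state ⟨removeDead(cfg, fs ∪ Δ), fs ∪ Δ⟩ reached by a failure transition is valid, and (2) for every nonempty Δ ⊆ fs, the state ⟨cfg, fs \ Δ⟩ reached by a recovery transition is valid. -/

import Mathlib

open scoped Classical

/-- Quorum kind for progress: majority or all. -/
inductive ProgressQ | majority | all

/-- Quorum kind for reconfiguration: majority or one. -/
inductive ReconfigQ | majority | one

/-- Size of a progress quorum relative to a replica set of size `k`. -/
def ProgressQ.size : ProgressQ → ℕ → ℕ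
  | .majority, k => (k + 2) / 2
  | .all, k => k

/-- Size of a reconfiguration quorum relative to a replica set of size `k`. -/
def ReconfigQ.size : ReconfigQ → ℕ → ℕ
  | .majority, k => (k + 2) / 2
  | .one, _ => 1

/-- A replication protocol. -/
structure RepProt where
  active : Bool
  progressQ : ProgressQ
  reconfigQ : ReconfigQ

/-- A software component. -/
structure SWComp (Fn DevType : Type) where
  fn : Fn
  fnReq : Finset Fn
  devices : Finset DevType
  cores : ℕ
  ram : ℕ
  fastStarting : Bool
  migratable : Bool
  persisState : Bool
  remoteUse : Bool
  resumable : Bool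
  singleInstance : Bool
  smallPersisState : Bool

/-- An unreplicated software instance: a software component placed on a computer. -/
structure SwInst (C Fn DevType : Type) where
  sw : SWComp Fn DevType
  computer : C

/-- A replicated software instance. The `primary` field is meaningful when the
replication protocol is passive. -/
structure RepSwInst (C Fn DevType : Type) where
  sw : SWComp Fn DevType
  repProt : RepProt
  computers : Finset C
  primary : C

/-- A configuration: finite sets of unreplicated and replicated software instances,
with at most one replicated instance per software component, and nonempty replica sets. -/
structure Config (C Fn DevType : Type) where
  SI : Finset (SwInst C Fn DevType)
  RSI : Finset (RepSwInst C Fn DevType)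
  uniqueRep : ∀ r1 ∈ RSI, ∀ r2 ∈ RSI, r1.sw = r2.sw → r1 = r2
  repNonempty : ∀ r ∈ RSI, r.computers.Nonempty

/-- A system: hardware components are either computers (type `C`) or stand-alone
devices (type `D`), both finite types; `Fn` is the type of functionalities and
`DevType` the type of device types. -/
structure Sys (C D Fn DevType : Type) where
  power : C ⊕ D → Finset (C ⊕ D)
  powerWF : WellFounded (fun a b : C ⊕ D => a ∈ power b)
  cores : C → ℕ
  ram : C → ℕ
  cdevices : C → Finset DevType
  dtype : D → DevType
  SW : Finset (SWComp Fn DevType)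
  compatible : SWComp Fn DevType → C → Prop

variable {C D Fn DevType HType : Type}

/-- A hardware component is live w.r.t. a failed set. -/
def Sys.live (sys : Sys C D Fn DevType) (fs : Finset (C ⊕ D)) : C ⊕ D → Prop :=
  sys.powerWF.fix fun h rec =>
    h ∉ fs ∧ (sys.power h = ∅ ∨ ∃ p, ∃ hp : p ∈ sys.power h, rec p hp)

/-- A device of type `dt` is available on computer `c` with failed set `fs`. -/
def Sys.availDev (sys : Sys C D Fn DevType) (dt : DevType) (c : C) (fs : Finset (C ⊕ D)) : Prop :=
  dt ∈ sys.cdevices c ∨ ∃ d : D, sys.dtype d = dt ∧ sys.live fs (Sum.inr d)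

/-- `AvailOn sys cfg fs fn c`: functionality `fn` is available on computer `c`
in configuration `cfg` with failed set `fs` (a least fixed point). -/
inductive AvailOn (sys : Sys C D Fn DevType) (cfg : Config C Fn DevType)
    (fs : Finset (C ⊕ D)) : Fn → C → Prop where
  | si (fn : Fn) (c : C) (si : SwInst C Fn DevType) :
      sys.live fs (.inl c) →
      si ∈ cfg.SI → si.sw.fn = fn →
      sys.live fs (.inl si.computer) →
      (c = si.computer ∨ si.sw.remoteUse) →
      (∀ fn' ∈ si.sw.fnReq, AvailOn sys cfg fs fn' si.computer) →
      (∀ dt ∈ si.sw.devices, sys.availDev dt si.computer fs) →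
      AvailOn sys cfg fs fn c
  | rsi (fn : Fn) (c : C) (rsi : RepSwInst C Fn DevType) (Q : Finset C) :
      sys.live fs (.inl c) →
      rsi ∈ cfg.RSI → rsi.sw.fn = fn →
      Q ⊆ rsi.computers →
      rsi.repProt.progressQ.size rsi.computers.card ≤ Q.card →
      (∀ c' ∈ Q, sys.live fs (.inl c')) →
      (c ∈ Q ∨ rsi.sw.remoteUse) →
      (rsi.repProt.active = true →
        ∀ c' ∈ Q, ∀ fn' ∈ rsi.sw.fnReq, AvailOn sys cfg fs fn' c') →
      (rsi.repProt.active = true →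
        ∀ c' ∈ Q, ∀ dt ∈ rsi.sw.devices, sys.availDev dt c' fs) →
      (rsi.repProt.active = false →
        ∀ fn' ∈ rsi.sw.fnReq, AvailOn sys cfg fs fn' rsi.primary) →
      (rsi.repProt.active = false →
        ∀ dt ∈ rsi.sw.devices, sys.availDev dt rsi.primary fs) →
      AvailOn sys cfg fs fn c

/-- Functionality `fn` is available in state `⟨cfg, fs⟩`. -/
def avail (sys : Sys C D Fn DevType) (cfg : Config C Fn DevType)
    (fs : Finset (C ⊕ D)) (fn : Fn) : Prop :=
  ∃ c : C, AvailOn sys cfg fs fn c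

/-- All functionalities in `F` are available in state `⟨cfg, fs⟩`. -/
def availSet (sys : Sys C D Fn DevType) (cfg : Config C Fn DevType)
    (fs : Finset (C ⊕ D)) (F : Set Fn) : Prop :=
  ∀ fn ∈ F, avail sys cfg fs fn

/-- Remove dead software instances on failed computers. -/
noncomputable def removeDead (cfg : Config C Fn DevType) (fs : Finset (C ⊕ D)) : Config C Fn DevType where
  SI := cfg.SI.filter fun si =>
    Sum.inl si.computer ∉ fs ∨ (si.sw.resumable ∧ si.sw.persisState ∧ si.sw.fastStarting)
  RSI := cfg.RSI.filter fun rsi =>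
    ¬ (∀ c ∈ rsi.computers, Sum.inl c ∈ fs) ∨
      (rsi.sw.resumable ∧ rsi.sw.persisState ∧ rsi.sw.fastStarting)
  uniqueRep := fun r1 h1 r2 h2 =>
    cfg.uniqueRep r1 (Finset.mem_of_mem_filter r1 h1) r2 (Finset.mem_of_mem_filter r2 h2)
  repNonempty := fun r h => cfg.repNonempty r (Finset.mem_of_mem_filter r h)

/-- Validity of a configuration. -/
def valid (sys : Sys C D Fn DevType) (cfg : Config C Fn DevType) : Prop :=
  (∀ c : C,
    ((cfg.SI.filter fun si => si.computer = c).sum fun si => si.sw.cores)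
      + ((cfg.RSI.filter fun rsi => c ∈ rsi.computers).sum fun rsi => rsi.sw.cores)
      ≤ sys.cores c ∧
    ((cfg.SI.filter fun si => si.computer = c).sum fun si => si.sw.ram)
      + ((cfg.RSI.filter fun rsi => c ∈ rsi.computers).sum fun rsi => rsi.sw.ram)
      ≤ sys.ram c) ∧
  (∀ sw : SWComp Fn DevType, sw.singleInstance →
    (cfg.SI.filter fun si => si.sw = sw).card + (cfg.RSI.filter fun rsi => rsi.sw = sw).card ≤ 1) ∧
  (∀ si ∈ cfg.SI, sys.compatible si.sw si.computer) ∧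
  (∀ si ∈ cfg.SI, si.sw ∈ sys.SW) ∧
  (∀ rsi ∈ cfg.RSI, rsi.sw ∈ sys.SW) ∧
  (∀ rsi ∈ cfg.RSI,
    (rsi.sw.persisState ∨ ¬ rsi.sw.resumable) ∧
    (∀ c ∈ rsi.computers, sys.compatible rsi.sw c) ∧
    (rsi.repProt.active = false → rsi.primary ∈ rsi.computers))

/-- Computer `c` satisfies the requirements to run software `sw` in configuration
`cfg` with failed set `fs`. -/
def canRun (sys : Sys C D Fn DevType) (c : C) (sw : SWComp Fn DevType)
    (cfg : Config C Fn DevType) (fs : Finset (C ⊕ D)) : Prop :=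
  sys.compatible sw c ∧ (∀ fn ∈ sw.fnReq, AvailOn sys cfg fs fn c) ∧
  (∀ dt ∈ sw.devices, sys.availDev dt c fs)

/-- Configuration `cfg` with failed set `fs` can be reconfigured to `cfg'`. -/
def reconfig (sys : Sys C D Fn DevType) (cfg cfg' : Config C Fn DevType)
    (fs : Finset (C ⊕ D)) : Prop :=
  valid sys cfg' ∧
  (∀ rsi' ∈ cfg'.RSI, ∃ rsi ∈ cfg.RSI, rsi.sw = rsi'.sw ∧ rsi.repProt = rsi'.repProt) ∧
  (∀ si' ∈ cfg'.SI, si' ∉ cfg.SI →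
    sys.live fs (.inl si'.computer) ∧
    canRun sys si'.computer si'.sw cfg' fs ∧
    ((si'.sw.fastStarting ∧ ¬ si'.sw.persisState ∧ si'.sw.resumable) ∨
     ((¬ si'.sw.persisState ∨ si'.sw.smallPersisState) ∧ si'.sw.migratable ∧
      ∃ si ∈ cfg.SI, si ∉ cfg'.SI ∧ si.sw = si'.sw))) ∧
  (∀ rsi' ∈ cfg'.RSI, ∀ rsi ∈ cfg.RSI, rsi.sw = rsi'.sw →
    rsi'.computers ≠ rsi.computers →
    (∃ Q ⊆ rsi.computers, rsi.repProt.reconfigQ.size rsi.computers.card ≤ Q.card ∧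
       ∀ c ∈ Q, sys.live fs (.inl c)) ∧
    (rsi'.computers ⊆ rsi.computers ∨
      (rsi.sw.fastStarting ∧ (¬ rsi.sw.persisState ∨ rsi.sw.smallPersisState))) ∧
    (rsi.repProt.active = true → ∀ c ∈ rsi'.computers, canRun sys c rsi'.sw cfg' fs) ∧
    (rsi.repProt.active = false →
      sys.live fs (.inl rsi'.primary) ∧ canRun sys rsi'.primary rsi'.sw cfg' fs))

/-- A failure model. -/
structure FailureModel (C D HType : Type) where
  hwType : C ⊕ D → HType
  n : HType → ℕ
  maxSimultT : HType → ℕ∞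
  maxSimult : ℕ∞

/-- The failed set `fs` is consistent with the failure model `fm`. -/
def consistent (fm : FailureModel C D HType) (fs : Finset (C ⊕ D)) : Prop :=
  ∀ t : HType, (fs.filter fun h => fm.hwType h = t).card ≤ fm.n t

/-- `fs'` is a possible next failed set after `fs` under the failure model `fm`. -/
def nextFS (fm : FailureModel C D HType) (fs fs' : Finset (C ⊕ D)) : Prop :=
  fs ⊂ fs' ∧ consistent fm fs' ∧ ((fs' \ fs).card : ℕ∞) ≤ fm.maxSimult ∧
  ∀ t : HType, (((fs' \ fs).filter fun h => fm.hwType h = t).card : ℕ∞) ≤ fm.maxSimultT t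

/-- `fs'` is a worst-case (⊆-maximal) next failed set after `fs`. -/
def nextFSworst (fm : FailureModel C D HType) (fs fs' : Finset (C ⊕ D)) : Prop :=
  nextFS fm fs fs' ∧ ∀ fs'', nextFS fm fs fs'' → fs' ⊆ fs'' → fs'' = fs'

section Resilience

/-- Resilience of state `⟨cfg, fs⟩` w.r.t. failure model `fm` and critical
functionalities `critFns`. -/
def resilient [Fintype C] [Fintype D] (sys : Sys C D Fn DevType) (fm : FailureModel C D HType)
    (critFns : Set Fn) (cfg : Config C Fn DevType) (fs : Finset (C ⊕ D)) : Prop :=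
  availSet sys cfg fs critFns ∧
  ∀ fs', nextFS fm fs fs' →
    ∃ cfg', reconfig sys (removeDead cfg fs') cfg' fs' ∧ resilient sys fm critFns cfg' fs'
termination_by Fintype.card (C ⊕ D) - fs.card
decreasing_by
  rename_i fs' h
  have hss : fs ⊂ fs' := h.1
  have h1 := Finset.card_lt_card hss
  have h2 := Finset.card_le_univ fs'
  try simp only [Finset.card_univ] at h2
  omega

/-- Variant of `resilient` with `nextFSworst` in place of `nextFS`. -/
def resilientW [Fintype C] [Fintype D] (sys : Sys C D Fn DevType) (fm : FailureModel C D HType)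
    (critFns : Set Fn) (cfg : Config C Fn DevType) (fs : Finset (C ⊕ D)) : Prop :=
  availSet sys cfg fs critFns ∧
  ∀ fs', nextFSworst fm fs fs' →
    ∃ cfg', reconfig sys (removeDead cfg fs') cfg' fs' ∧ resilientW sys fm critFns cfg' fs'
termination_by Fintype.card (C ⊕ D) - fs.card
decreasing_by
  rename_i fs' h
  have hss : fs ⊂ fs' := h.1.1
  have h1 := Finset.card_lt_card hss
  have h2 := Finset.card_le_univ fs'
  try simp only [Finset.card_univ] at h2
  omega

end Resilience

/-- One-resilience of state `⟨cfg, fs⟩`. -/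
def oneResilient (sys : Sys C D Fn DevType) (fm : FailureModel C D HType)
    (critFns : Set Fn) (cfg : Config C Fn DevType) (fs : Finset (C ⊕ D)) : Prop :=
  availSet sys cfg fs critFns ∧
  ∀ fs', nextFS fm fs fs' →
    ∃ cfg', reconfig sys (removeDead cfg fs') cfg' fs' ∧ availSet sys cfg' fs' critFns

/-- Variant of `oneResilient` with `nextFSworst` in place of `nextFS`. -/
def oneResilientW (sys : Sys C D Fn DevType) (fm : FailureModel C D HType)
    (critFns : Set Fn) (cfg : Config C Fn DevType) (fs : Finset (C ⊕ D)) : Prop :=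
  availSet sys cfg fs critFns ∧
  ∀ fs', nextFSworst fm fs fs' →
    ∃ cfg', reconfig sys (removeDead cfg fs') cfg' fs' ∧ availSet sys cfg' fs' critFns

/-- The failure model is unlimited-rate. -/
def unlimitedRate (fm : FailureModel C D HType) : Prop :=
  fm.maxSimult = ⊤ ∧ ∀ t : HType, fm.maxSimultT t = ⊤

/-- The software component `sw` is relocatable in configuration `cfg`. -/
def reloc (sw : SWComp Fn DevType) (cfg : Config C Fn DevType) : Prop :=
  (sw.fastStarting ∧ ¬ sw.persisState ∧ sw.resumable) ∧
  ((∃ si ∈ cfg.SI, sw.fn ∈ si.sw.fnReq) → sw.remoteUse) ∧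
  (∀ si ∈ cfg.SI, si.sw.fn ∈ sw.fnReq → si.sw.remoteUse) ∧
  (∀ rsi ∈ cfg.RSI, rsi.sw.fn ∈ sw.fnReq → rsi.sw.remoteUse)

/-- The state `⟨cfg, fs⟩` is valid. -/
def validState (sys : Sys C D Fn DevType) (cfg : Config C Fn DevType)
    (fs : Finset (C ⊕ D)) : Prop :=
  valid sys cfg ∧ cfg = removeDead cfg fs

/-- rs-equivalence (relocatable-software equivalence) of configurations. -/
def rsEquiv (sys : Sys C D Fn DevType) (cfg1 cfg2 : Config C Fn DevType) : Prop :=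
  valid sys cfg1 ∧ valid sys cfg2 ∧
  let R1 := cfg1.SI.filter fun si => reloc si.sw cfg1
  let R2 := cfg2.SI.filter fun si => reloc si.sw cfg2
  (∃ f : {si // si ∈ R1} → {si // si ∈ R2}, Function.Bijective f ∧
    ∀ si : {si // si ∈ R1},
      (si : SwInst C Fn DevType).sw = ((f si : SwInst C Fn DevType)).sw ∧
      (si : SwInst C Fn DevType).sw.devices ∩ sys.cdevices (si : SwInst C Fn DevType).computer
        = ((f si : SwInst C Fn DevType)).sw.devices
            ∩ sys.cdevices ((f si : SwInst C Fn DevType)).computer) ∧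
  cfg1.SI \ R1 = cfg2.SI \ R2 ∧ cfg1.RSI = cfg2.RSI

/-- The functionality dependency relation: `fn1` depends on `fn2`. -/
def depRel (sys : Sys C D Fn DevType) (fn1 fn2 : Fn) : Prop :=
  ∃ sw ∈ sys.SW, sw.fn = fn1 ∧ fn2 ∈ sw.fnReq

theorem Config.ext {cfg cfg' : Config C Fn DevType}
    (hSI : cfg.SI = cfg'.SI) (hRSI : cfg.RSI = cfg'.RSI) : cfg = cfg' := by
  cases cfg; cases cfg'; simp_all

theorem valid.mono {sys : Sys C D Fn DevType} {cfg cfg' : Config C Fn DevType} (hv : valid sys cfg)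
    (hSI : cfg'.SI ⊆ cfg.SI) (hRSI : cfg'.RSI ⊆ cfg.RSI) : valid sys cfg' := by
  obtain ⟨hres, hsingle, hcompat, hSW, hRSW, hrep⟩ := hv
  refine ⟨fun c => ?_, fun sw hsw => ?_, fun si hsi => hcompat si (hSI hsi),
    fun si hsi => hSW si (hSI hsi), fun rsi hrsi => hRSW rsi (hRSI hrsi),
    fun rsi hrsi => hrep rsi (hRSI hrsi)⟩
  · obtain ⟨hcores, hram⟩ := hres c
    constructor
    · refine le_trans ?_ hcores
      gcongr
    · refine le_trans ?_ hram
      gcongr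
  · refine le_trans ?_ (hsingle sw hsw)
    gcongr

theorem removeDead_removeDead_of_subset (cfg : Config C Fn DevType) {fs fs' : Finset (C ⊕ D)}
    (h : fs' ⊆ fs) :
    removeDead (removeDead cfg fs) fs' = removeDead cfg fs := by
  refine Config.ext ?_ ?_ <;> simp only [removeDead, Finset.filter_filter]
  · refine Finset.filter_congr fun si _ => ?_
    have hmem : Sum.inl si.computer ∈ fs' → Sum.inl si.computer ∈ fs := @h _
    tauto
  · refine Finset.filter_congr fun rsi _ => ?_
    have hall : (∀ c ∈ rsi.computers, Sum.inl c ∈ fs') → ∀ c ∈ rsi.computers, Sum.inl c ∈ fs :=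
      fun h' c hc => h (h' c hc)
    tauto

theorem removeDead_eq_self_of_subset {cfg : Config C Fn DevType} {fs fs' : Finset (C ⊕ D)}
    (hcfg : cfg = removeDead cfg fs) (h : fs' ⊆ fs) :
    cfg = removeDead cfg fs' := by
  rw [hcfg, removeDead_removeDead_of_subset cfg h]

theorem valid_removeDead {sys : Sys C D Fn DevType}
    {cfg : Config C Fn DevType} (hv : valid sys cfg) (fs : Finset (C ⊕ D)) :
    valid sys (removeDead cfg fs) :=
  hv.mono (Finset.filter_subset _ _) (Finset.filter_subset _ _)

theorem transitions_preserve_validState_general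
    {C D Fn DevType : Type}
    (sys : Sys C D Fn DevType)
    (cfg : Config C Fn DevType) (fs : Finset (C ⊕ D))
    (h : validState sys cfg fs) :
    (∀ Δ : Finset (C ⊕ D), Δ.Nonempty → (∀ x ∈ Δ, x ∉ fs) →
      validState sys (removeDead cfg (fs ∪ Δ)) (fs ∪ Δ)) ∧
    (∀ Δ : Finset (C ⊕ D), Δ.Nonempty → Δ ⊆ fs →
      validState sys cfg (fs \ Δ)) := by
  obtain ⟨hv, hcfg⟩ := h
  constructor
  · intro Δ _ _
    exact ⟨valid_removeDead hv _, (removeDead_removeDead_of_subset cfg subset_rfl).symm⟩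
  · intro Δ _ _
    exact ⟨hv, removeDead_eq_self_of_subset hcfg Finset.sdiff_subset⟩

/-- Failure and recovery transitions preserve state validity. -/
theorem transitions_preserve_validState
    {C D Fn DevType : Type} [Fintype C] [Fintype D]
    (sys : Sys C D Fn DevType)
    (cfg : Config C Fn DevType) (fs : Finset (C ⊕ D))
    (h : validState sys cfg fs) :
    (∀ Δ : Finset (C ⊕ D), Δ.Nonempty → (∀ x ∈ Δ, x ∉ fs) →
      validState sys (removeDead cfg (fs ∪ Δ)) (fs ∪ Δ)) ∧
    (∀ Δ : Finset (C ⊕ D), Δ.Nonempty → Δ ⊆ fs →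
      validState sys cfg (fs \ Δ)) :=
  transitions_preserve_validState_general sys cfg fs h
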